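/- arXiv:0712.1360 — 3 statements merged into one kernel-verified Lean document; each statement's English description precedes it below -/
import Mathlib

section
/- Let w be a vector in R^d and let w_m denote the vector obtained from w by keeping its m largest coordinates in absolute value and setting the rest to zero. Then the l2 norm of w - w_m is at most ||w||_1 / (2*sqrt(m)). -/
open scoped BigOperators

noncomputable def l2 {d : ℕ} (v : Fin d → ℝ) : ℝ := Real.sqrt (∑ i, (v i)^2)

noncomputable def l1 {d : ℕ} (v : Fin d → ℝ) : ℝ := ∑ i, |v i|

noncomputable def linf {d : ℕ} (v : Fin d → ℝ) : ℝ := ⨆ i, |v i|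

noncomputable def restrict {d : ℕ} (v : Fin d → ℝ) (T : Finset (Fin d)) : Fin d → ℝ :=
  fun i => if i ∈ T then v i else 0

open Classical in
noncomputable def spt {d : ℕ} (v : Fin d → ℝ) : Finset (Fin d) :=
  Finset.univ.filter (fun i => v i ≠ 0)

def RIC {N d : ℕ} (Φ : Matrix (Fin N) (Fin d) ℝ) (m : ℕ) (ε : ℝ) : Prop :=
  ∀ z : Fin d → ℝ, (spt z).card ≤ m →
    (1 - ε) * l2 z ≤ l2 (Φ.mulVec z) ∧ l2 (Φ.mulVec z) ≤ (1 + ε) * l2 z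

/-! Every one of the `m` kept entries dominates every discarded one, so
`m · ‖w - w_m‖₂² ≤ (∑_{i ∈ S} |w i|) (∑_{j ∉ S} |w j|)`, and by AM–GM the right-hand side is at
most `‖w‖₁² / 4`. -/

open Finset in
theorem card_mul_sum_sq_le_sum_mul_sum {ι R : Type*} [CommSemiring R] [PartialOrder R]
    [IsOrderedRing R] (A B : Finset ι) (x : ι → R) (hB : ∀ j ∈ B, 0 ≤ x j)
    (hAB : ∀ i ∈ A, ∀ j ∈ B, x j ≤ x i) :
    #A * ∑ j ∈ B, x j ^ 2 ≤ (∑ i ∈ A, x i) * ∑ j ∈ B, x j :=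
  calc #A * ∑ j ∈ B, x j ^ 2 = ∑ _i ∈ A, ∑ j ∈ B, x j * x j := by
        simp only [sum_const, nsmul_eq_mul, sq]
    _ ≤ ∑ i ∈ A, ∑ j ∈ B, x i * x j := sum_le_sum fun i hi => sum_le_sum fun j hj =>
        mul_le_mul_of_nonneg_right (hAB i hi j hj) (hB j hj)
    _ = (∑ i ∈ A, x i) * ∑ j ∈ B, x j := (sum_mul_sum A B x x).symm

theorem l2_sub_restrict {d : ℕ} (v : Fin d → ℝ) (T : Finset (Fin d)) :
    l2 (v - restrict v T) = √(∑ j ∈ Tᶜ, v j ^ 2) := by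
  rw [l2, ← Finset.sum_add_sum_compl T]
  refine congrArg Real.sqrt ?_
  rw [Finset.sum_eq_zero fun i hi => by simp [restrict, hi], zero_add]
  exact Finset.sum_congr rfl fun j hj => by simp [restrict, Finset.mem_compl.mp hj]

/-- Lemma 3.5 (Comparing the norms): if $S$ is a set of $m$ coordinates of $w$ of
largest absolute value, then $\|w - w_m\|_2 \le \|w\|_1 / (2\sqrt m)$. -/
theorem stmt0 {d : ℕ} (w : Fin d → ℝ) (m : ℕ) (hm : 0 < m)
    (S : Finset (Fin d)) (hcard : S.card = m)
    (hbig : ∀ i ∈ S, ∀ j ∉ S, |w j| ≤ |w i|) :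
    l2 (w - restrict w S) ≤ l1 w / (2 * Real.sqrt m) := by
  have hm' : (0 : ℝ) < m := Nat.cast_pos.mpr hm
  set head := ∑ i ∈ S, |w i|
  set tail := ∑ j ∈ Sᶜ, |w j|
  have hsplit : l1 w = head + tail := (Finset.sum_add_sum_compl S _).symm
  have htail : m * ∑ j ∈ Sᶜ, w j ^ 2 ≤ head * tail := by
    simpa only [hcard, sq_abs] using card_mul_sum_sq_le_sum_mul_sum S Sᶜ (fun i => |w i|)
      (fun j _ => abs_nonneg (w j)) fun i hi j hj => hbig i hi j (Finset.mem_compl.mp hj)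
  rw [l2_sub_restrict, Real.sqrt_le_left (by rw [hsplit]; positivity), div_pow, mul_pow,
    Real.sq_sqrt hm'.le, le_div_iff₀ (by positivity), hsplit]
  linarith [four_mul_le_sq_add head tail]
end

section
/- Assume Phi satisfies the Restricted Isometry Condition with parameters (2n, eps), 0 < eps < 1. Let I and J be disjoint index sets with |I ∪ J| <= 2n, and let P_I and P_J be the orthogonal projections in R^N onto the column spans of Phi restricted to I and to J respectively. Then the operator norm of P_I P_J is at most 2.2 * eps. -/
open scoped BigOperators

noncomputable def proj {N : ℕ} (L : Submodule ℝ (EuclideanSpace ℝ (Fin N))) :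
    EuclideanSpace ℝ (Fin N) →L[ℝ] EuclideanSpace ℝ (Fin N) :=
  L.subtypeL.comp L.orthogonalProjectionOnto

noncomputable def colSpan {N d : ℕ} (Φ : Matrix (Fin N) (Fin d) ℝ) (I : Finset (Fin d)) :
    Submodule ℝ (EuclideanSpace ℝ (Fin N)) :=
  Submodule.span ℝ ((fun j => (WithLp.toLp 2 (fun i => Φ i j) : EuclideanSpace ℝ (Fin N))) '' (I : Set (Fin d)))

/-! By the RIC, `Φᵀ Φ` restricted to vectors supported in `I ∪ J` has spectrum in `[m, M]` with
`m = (1 - ε)²`, `M = (1 + ε)²`, and vectors supported in `I` and in `J` are orthogonal.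
Wielandt's inequality then bounds the cosine of the angle between `Φ a` and `Φ b` by
`(M - m) / (M + m) = 2ε / (1 + ε²) ≤ 2ε`. Finally `‖P_I P_J x‖² = ⟪P_I P_J x, P_J x⟫`, so a bound
on the cosines between the two column spans bounds `‖P_I P_J‖`. -/

open scoped RealInnerProductSpace

theorem norm_add_smul_sq_real {E : Type*} [NormedAddCommGroup E] [InnerProductSpace ℝ E]
    (x y : E) (s : ℝ) : ‖x + s • y‖ ^ 2 = ‖x‖ ^ 2 + 2 * s * ⟪x, y⟫ + s ^ 2 * ‖y‖ ^ 2 := by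
  rw [norm_add_sq_real, real_inner_smul_right, norm_smul, mul_pow, Real.norm_eq_abs, sq_abs]
  ring

theorem abs_real_inner_le_wielandt {E F : Type*} [NormedAddCommGroup E] [InnerProductSpace ℝ E]
    [NormedAddCommGroup F] [InnerProductSpace ℝ F] {a b : E} {u v : F} {m M : ℝ}
    (hm : 0 ≤ m) (hmM : m ≤ M) (hab : ⟪a, b⟫ = 0)
    (hlow : ∀ s : ℝ, m * ‖a + s • b‖ ^ 2 ≤ ‖u + s • v‖ ^ 2)
    (hup : ∀ s : ℝ, ‖u + s • v‖ ^ 2 ≤ M * ‖a + s • b‖ ^ 2) :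
    (M + m) * |⟪u, v⟫| ≤ (M - m) * (‖u‖ * ‖v‖) := by
  -- `‖a + s • b‖ = ‖a - s • b‖`, so `m ‖u + s • v‖² ≤ m M ‖a + s • b‖² ≤ M ‖u - s • v‖²`.
  have quadratic_nonneg (s : ℝ) : 0 ≤ ((M - m) * ‖v‖ ^ 2) * (s * s)
      + (-(2 * (M + m) * ⟪u, v⟫)) * s + (M - m) * ‖u‖ ^ 2 := by
    have hplus := mul_le_mul_of_nonneg_left (hup s) hm
    have hminus := mul_le_mul_of_nonneg_left (hlow (-s)) (hm.trans hmM)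
    simp only [norm_add_smul_sq_real, hab] at hplus hminus
    nlinarith
  have hdisc := discrim_le_zero quadratic_nonneg
  rw [discrim] at hdisc
  rw [← abs_of_nonneg (by linarith : 0 ≤ M + m), ← abs_mul]
  refine abs_le_of_sq_le_sq ?_ (mul_nonneg (sub_nonneg.2 hmM) (by positivity))
  nlinarith

theorem Submodule.norm_starProjection_comp_starProjection_le {𝕜 E : Type*} [RCLike 𝕜]
    [NormedAddCommGroup E] [InnerProductSpace 𝕜 E] {U V : Submodule 𝕜 E}
    [U.HasOrthogonalProjection] [V.HasOrthogonalProjection] {c : ℝ} (hc : 0 ≤ c)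
    (h : ∀ u ∈ U, ∀ v ∈ V, ‖inner 𝕜 u v‖ ≤ c * (‖u‖ * ‖v‖)) :
    ‖U.starProjection ∘L V.starProjection‖ ≤ c := by
  refine ContinuousLinearMap.opNorm_le_bound _ hc fun x => ?_
  set w := V.starProjection x
  set z := U.starProjection w
  have hz : ‖z‖ ^ 2 ≤ c * (‖z‖ * ‖w‖) := calc
    ‖z‖ ^ 2 = RCLike.re (inner 𝕜 z w) := (U.re_inner_starProjection_eq_normSq w).symm
    _ ≤ ‖inner 𝕜 z w‖ := RCLike.re_le_norm _
    _ ≤ c * (‖z‖ * ‖w‖) := h z (U.starProjection_apply_mem w) w (V.starProjection_apply_mem x)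
  have hw : ‖w‖ ≤ ‖x‖ := V.norm_starProjection_apply_le x
  change ‖z‖ ≤ c * ‖x‖
  nlinarith [norm_nonneg z, mul_nonneg hc (norm_nonneg x),
    mul_le_mul_of_nonneg_left hw (mul_nonneg hc (norm_nonneg z))]

theorem l2_eq_norm {n : ℕ} (v : Fin n → ℝ) :
    l2 v = ‖(WithLp.toLp 2 v : EuclideanSpace ℝ (Fin n))‖ := by
  simp [l2, EuclideanSpace.norm_eq]

theorem mem_spt {d : ℕ} {v : Fin d → ℝ} {i : Fin d} : i ∈ spt v ↔ v i ≠ 0 := by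
  simp [spt]

theorem spt_subset_iff {d : ℕ} {v : Fin d → ℝ} {I : Finset (Fin d)} :
    spt v ⊆ I ↔ ∀ i ∉ I, v i = 0 := by
  simp only [Finset.subset_iff, mem_spt]
  exact forall_congr' fun i => not_imp_comm

theorem colSpan_eq_map {N d : ℕ} (Φ : Matrix (Fin N) (Fin d) ℝ) (I : Finset (Fin d)) :
    colSpan Φ I =
      (Submodule.span ℝ (PiLp.basisFun 2 ℝ (Fin d) '' I)).map (Matrix.toLpLin 2 2 Φ) := by
  rw [Submodule.map_span, Set.image_image, colSpan]
  refine congrArg _ (Set.image_congr fun j _ => ?_)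
  simp only [PiLp.basisFun_apply, Matrix.toLpLin_apply, PiLp.ofLp_single, Matrix.mulVec_single,
    MulOpposite.op_one, one_smul]
  rfl

theorem mem_colSpan_iff {N d : ℕ} {Φ : Matrix (Fin N) (Fin d) ℝ} {I : Finset (Fin d)}
    {v : EuclideanSpace ℝ (Fin N)} :
    v ∈ colSpan Φ I ↔
      ∃ a : EuclideanSpace ℝ (Fin d), spt a.ofLp ⊆ I ∧ Matrix.toLpLin 2 2 Φ a = v := by
  simp only [colSpan_eq_map, Submodule.mem_map, Module.Basis.mem_span_image, Set.subset_def,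
    Finsupp.mem_support_iff, PiLp.basisFun_repr, Finset.subset_iff, mem_spt, Finset.mem_coe]

theorem proj_eq_starProjection {N : ℕ} (L : Submodule ℝ (EuclideanSpace ℝ (Fin N))) :
    proj L = L.starProjection :=
  rfl

theorem RIC.sq_norm_bounds {N d m : ℕ} {Φ : Matrix (Fin N) (Fin d) ℝ} {ε : ℝ} (hRIC : RIC Φ m ε)
    (hε1 : ε ≤ 1) {z : EuclideanSpace ℝ (Fin d)} (hz : (spt z.ofLp).card ≤ m) :
    (1 - ε) ^ 2 * ‖z‖ ^ 2 ≤ ‖Matrix.toLpLin 2 2 Φ z‖ ^ 2 ∧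
      ‖Matrix.toLpLin 2 2 Φ z‖ ^ 2 ≤ (1 + ε) ^ 2 * ‖z‖ ^ 2 := by
  obtain ⟨hlow, hup⟩ := hRIC z.ofLp hz
  rw [l2_eq_norm, l2_eq_norm, WithLp.toLp_ofLp, ← Matrix.toLpLin_apply] at hlow hup
  rw [← mul_pow, ← mul_pow]
  exact ⟨pow_le_pow_left₀ (mul_nonneg (by linarith) (norm_nonneg _)) hlow 2,
    pow_le_pow_left₀ (norm_nonneg _) hup 2⟩

theorem RIC.abs_inner_le {N d m : ℕ} {Φ : Matrix (Fin N) (Fin d) ℝ} {ε : ℝ} (hRIC : RIC Φ m ε)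
    (hε : 0 ≤ ε) (hε1 : ε ≤ 1) {I J : Finset (Fin d)} (hdisj : Disjoint I J)
    (hcard : (I ∪ J).card ≤ m) {u v : EuclideanSpace ℝ (Fin N)} (hu : u ∈ colSpan Φ I)
    (hv : v ∈ colSpan Φ J) :
    |⟪u, v⟫| ≤ 2 * ε * (‖u‖ * ‖v‖) := by
  obtain ⟨a, ha, rfl⟩ := mem_colSpan_iff.1 hu
  obtain ⟨b, hb, rfl⟩ := mem_colSpan_iff.1 hv
  rw [spt_subset_iff] at ha hb
  have hab : ⟪a, b⟫ = 0 := by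
    refine Finset.sum_eq_zero fun i _ => ?_
    by_cases hi : i ∈ I
    · simp [hb i (Finset.disjoint_left.1 hdisj hi)]
    · simp [ha i hi]
  have hsparse (s : ℝ) : (spt (a + s • b).ofLp).card ≤ m := by
    refine (Finset.card_le_card (spt_subset_iff.2 fun i hi => ?_)).trans hcard
    rw [Finset.mem_union, not_or] at hi
    simp [ha i hi.1, hb i hi.2]
  have hwielandt := abs_real_inner_le_wielandt (M := (1 + ε) ^ 2) (sq_nonneg (1 - ε))
    (by nlinarith) hab
    (fun s => by simpa using (hRIC.sq_norm_bounds hε1 (hsparse s)).1)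
    (fun s => by simpa using (hRIC.sq_norm_bounds hε1 (hsparse s)).2)
  nlinarith [mul_nonneg (sq_nonneg ε) (abs_nonneg ⟪Matrix.toLpLin 2 2 Φ a, Matrix.toLpLin 2 2 Φ b⟫)]

/-- Almost orthogonality of columns. -/
theorem stmt6 {N d : ℕ} (Φ : Matrix (Fin N) (Fin d) ℝ) (n : ℕ) (ε : ℝ)
    (hε : 0 < ε) (hε1 : ε < 1) (hRIC : RIC Φ (2 * n) ε)
    (I J : Finset (Fin d)) (hdisj : Disjoint I J) (hcard : (I ∪ J).card ≤ 2 * n) :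
    ‖(proj (colSpan Φ I)).comp (proj (colSpan Φ J))‖ ≤ 2.2 * ε := by
  have hinner : ∀ u ∈ colSpan Φ I, ∀ v ∈ colSpan Φ J, ‖⟪u, v⟫‖ ≤ 2 * ε * (‖u‖ * ‖v‖) :=
    fun u hu v hv => (Real.norm_eq_abs _).trans_le
      (hRIC.abs_inner_le hε.le hε1.le hdisj hcard hu hv)
  rw [proj_eq_starProjection, proj_eq_starProjection]
  calc _ ≤ 2 * ε := Submodule.norm_starProjection_comp_starProjection_le (by positivity) hinner
    _ ≤ 2.2 * ε := by linarith
end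

section
/- Let u be a vector supported on a finite set J_0 whose nonzero coordinates are comparable: |u(i)| <= 2|u(j)| for all i, j in J_0. If Lambda is a subset of J_0 with |Lambda| > |J_0|/2, then ||u|_Lambda||_2 > ||u|_{J_0}||_2 / sqrt(5). -/
open scoped BigOperators

lemma l2_restrict {d : ℕ} (v : Fin d → ℝ) (T : Finset (Fin d)) :
    l2 (restrict v T) = Real.sqrt (∑ i ∈ T, (v i)^2) := by
  unfold l2 restrict
  congr 1
  rw [← Finset.sum_subset (Finset.subset_univ T)]
  · exact Finset.sum_congr rfl (fun i hi => by simp [hi])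
  · intro i _ hi; simp [hi]

/- Both sums are compared with the minimum `m` of `g` on `s`: the sum over `s` is at least
`#s * m`, while each of the fewer than `#s` terms outside `s` is at most `K * m`. -/

lemma sum_lt_add_one_mul_sum_of_card_lt_two_mul {ι : Type*} (g : ι → ℝ) {s t : Finset ι}
    {K : ℝ} (hK : 0 < K) (hst : s ⊆ t) (hpos : ∀ j ∈ s, 0 < g j)
    (hcomp : ∀ i ∈ t, ∀ j ∈ s, g i ≤ K * g j) (hcard : t.card < 2 * s.card) :
    ∑ i ∈ t, g i < (K + 1) * ∑ i ∈ s, g i := by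
  classical
  have hs : s.Nonempty := Finset.card_pos.mp (by omega)
  obtain ⟨j₀, hj₀, hmin⟩ := s.exists_min_image g hs
  have hlow : s.card • g j₀ ≤ ∑ j ∈ s, g j := Finset.card_nsmul_le_sum s g _ hmin
  have hhigh : ∑ i ∈ t \ s, g i ≤ (t \ s).card • (K * g j₀) :=
    Finset.sum_le_card_nsmul _ g _ fun i hi => hcomp i (Finset.sdiff_subset hi) j₀ hj₀
  have hfewer : ((t \ s).card : ℝ) < s.card := by
    have := Finset.card_sdiff_add_card_eq_card hst
    exact_mod_cast (by omega : (t \ s).card < s.card)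
  rw [nsmul_eq_mul] at hlow hhigh
  have hKm : 0 < K * g j₀ := mul_pos hK (hpos j₀ hj₀)
  calc ∑ i ∈ t, g i = ∑ i ∈ t \ s, g i + ∑ i ∈ s, g i := (Finset.sum_sdiff hst).symm
    _ ≤ (t \ s).card * (K * g j₀) + ∑ i ∈ s, g i := by gcongr
    _ < s.card * (K * g j₀) + ∑ i ∈ s, g i := by gcongr
    _ ≤ K * ∑ i ∈ s, g i + ∑ i ∈ s, g i := by rw [mul_left_comm]; gcongr
    _ = (K + 1) * ∑ i ∈ s, g i := by ring

lemma sum_sq_lt_five_mul_sum_sq_of_card_lt_two_mul {ι : Type*} (u : ι → ℝ) {s t : Finset ι}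
    (hst : s ⊆ t) (hnonzero : ∀ i ∈ t, u i ≠ 0) (hcomp : ∀ i ∈ t, ∀ j ∈ t, |u i| ≤ 2 * |u j|)
    (hcard : t.card < 2 * s.card) :
    ∑ i ∈ t, u i ^ 2 < 5 * ∑ i ∈ s, u i ^ 2 := by
  have hsq : ∀ i ∈ t, ∀ j ∈ s, u i ^ 2 ≤ 4 * u j ^ 2 := fun i hi j hj =>
    calc u i ^ 2 ≤ (2 * u j) ^ 2 :=
          sq_le_sq.mpr (by rw [abs_mul, abs_two]; exact hcomp i hi j (hst hj))
      _ = 4 * u j ^ 2 := by ring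
  have hpos : ∀ j ∈ s, 0 < u j ^ 2 := fun j hj => sq_pos_of_ne_zero (hnonzero j (hst hj))
  have h := sum_lt_add_one_mul_sum_of_card_lt_two_mul (fun i => u i ^ 2)
    (by norm_num : (0 : ℝ) < 4) hst hpos hsq hcard
  rwa [show (4 : ℝ) + 1 = 5 by norm_num] at h

theorem stmt9_general {d : ℕ} (u : Fin d → ℝ) (J₀ : Finset (Fin d))
    (hnonzero : ∀ i ∈ J₀, u i ≠ 0)
    (hcomp : ∀ i ∈ J₀, ∀ j ∈ J₀, |u i| ≤ 2 * |u j|)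
    (Λ : Finset (Fin d)) (hΛ : Λ ⊆ J₀) (hbig : J₀.card < 2 * Λ.card) :
    l2 (restrict u Λ) > l2 (restrict u J₀) / Real.sqrt 5 := by
  have key := sum_sq_lt_five_mul_sum_sq_of_card_lt_two_mul u hΛ hnonzero hcomp hbig
  rw [l2_restrict, l2_restrict, ← Real.sqrt_div (by positivity)]
  exact Real.sqrt_lt_sqrt (by positivity) (by linarith)

/-- A majority subset of comparable nonzero coordinates captures more than a
1/√5 fraction of the energy. -/
theorem stmt9 {d : ℕ} (u : Fin d → ℝ) (J₀ : Finset (Fin d))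
    (hsupp : ∀ i ∉ J₀, u i = 0)
    (hnonzero : ∀ i ∈ J₀, u i ≠ 0)
    (hcomp : ∀ i ∈ J₀, ∀ j ∈ J₀, |u i| ≤ 2 * |u j|)
    (Λ : Finset (Fin d)) (hΛ : Λ ⊆ J₀) (hbig : J₀.card < 2 * Λ.card) :
    l2 (restrict u Λ) > l2 (restrict u J₀) / Real.sqrt 5 :=
  stmt9_general u J₀ hnonzero hcomp Λ hΛ hbig
end
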